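/- Let H be a real Hilbert space, A : H → H a continuous self-adjoint nonnegative linear operator, 0 ≤ p ≤ 1, γ ≥ 1, and u₀ ∈ H with ⟨Au₀,u₀⟩ > 0. Let u : [0,∞) → H be a C¹ solution of u'(t) + (1+t)^{p} ⟨Au(t),u(t)⟩^γ A u(t) = 0 with u(0) = u₀. Then there exist positive constants γ₃ and γ₄ (depending only on u₀, A, γ, p) such that for all t ≥ 0: γ₃ (1+t)^{−(p+1)/γ} ≤ ⟨Au(t),u(t)⟩ ≤ γ₄ (1+t)^{−(p+1)/(γ+1)}. -/

import Mathlib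

/-!
Write `f(t) = ⟨Au(t),u(t)⟩`. Along the flow `f' = -2(1+t)^p f^γ |Au|²`, and the inequality
`|Ax|² ≤ ‖A‖⟨Ax,x⟩` for nonnegative self-adjoint `A` turns this into
`-2‖A‖(1+t)^p f^{γ+1} ≤ f' ≤ 0`. Grönwall keeps `f` positive, and the left inequality reads
`(f^{-γ})' ≤ 2γ‖A‖(1+t)^p`, which integrates to the lower bound. For the upper bound,
`(2/(p+1))(1+t)^{p+1} f^{γ+1} + |u|²` is nonincreasing: `(|u|²)' = -2(1+t)^p f^{γ+1}` cancels
the derivative of the weight, and what remains is a multiple of `f' ≤ 0`.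
-/

open Real
open scoped RealInnerProductSpace

/-- `u` (with derivative `u'`) is a global C¹ solution on `[0,∞)` of the parabolic
Cauchy problem `u' + (1+t)^{p} ⟨Au,u⟩^γ A u = 0`, `u(0) = u₀`. -/
def IsParSolution {H : Type*} [NormedAddCommGroup H] [InnerProductSpace ℝ H]
    (A : H →L[ℝ] H) (p γ : ℝ) (u₀ : H) (u u' : ℝ → H) : Prop :=
  u 0 = u₀ ∧
  (∀ t ∈ Set.Ici (0:ℝ), HasDerivWithinAt u (u' t) (Set.Ici 0) t) ∧
  ContinuousOn u' (Set.Ici 0) ∧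
  (∀ t ∈ Set.Ici (0:ℝ),
    u' t + ((1+t) ^ p * ⟪A (u t), u t⟫ ^ γ) • A (u t) = 0)

open Set

namespace ContinuousLinearMap.IsPositive

variable {H : Type*} [NormedAddCommGroup H] [InnerProductSpace ℝ H] {A : H →L[ℝ] H}

-- The quadratic `s ↦ ⟪A (x + s • y), x + s • y⟫` is nonnegative, so its discriminant is
-- nonpositive.
theorem real_inner_sq_le (hA : A.IsPositive) (x y : H) :
    ⟪A x, y⟫ ^ 2 ≤ ⟪A x, x⟫ * ⟪A y, y⟫ := by
  have hyx : ⟪A y, x⟫ = ⟪A x, y⟫ := by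
    rw [hA.inner_left_eq_inner_right, real_inner_comm]
  have hquad : ∀ s : ℝ, 0 ≤ ⟪A y, y⟫ * (s * s) + 2 * ⟪A x, y⟫ * s + ⟪A x, x⟫ := fun s => by
    have h := hA.inner_nonneg_left (x + s • y)
    simp only [map_add, map_smul, inner_add_left, inner_add_right, real_inner_smul_left,
      real_inner_smul_right, hyx] at h
    linarith
  have := discrim_le_zero hquad
  rw [discrim] at this
  linarith

theorem norm_apply_sq_le (hA : A.IsPositive) (x : H) : ‖A x‖ ^ 2 ≤ ‖A‖ * ⟪A x, x⟫ := by
  rcases (sq_nonneg ‖A x‖).eq_or_lt with h | h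
  · rw [← h]
    exact mul_nonneg (norm_nonneg A) (hA.inner_nonneg_left x)
  have hAA : ⟪A (A x), A x⟫ ≤ ‖A‖ * ‖A x‖ ^ 2 :=
    calc ⟪A (A x), A x⟫ ≤ ‖A (A x)‖ * ‖A x‖ := real_inner_le_norm _ _
      _ ≤ ‖A‖ * ‖A x‖ * ‖A x‖ := by gcongr; exact A.le_opNorm _
      _ = ‖A‖ * ‖A x‖ ^ 2 := by ring
  have hcs := hA.real_inner_sq_le x (A x)
  rw [real_inner_self_eq_norm_sq] at hcs
  refine le_of_mul_le_mul_right ?_ h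
  calc ‖A x‖ ^ 2 * ‖A x‖ ^ 2 = (‖A x‖ ^ 2) ^ 2 := by ring
    _ ≤ ⟪A x, x⟫ * (‖A‖ * ‖A x‖ ^ 2) := hcs.trans (by gcongr; exact hA.inner_nonneg_left x)
    _ = ‖A‖ * ⟪A x, x⟫ * ‖A x‖ ^ 2 := by ring

end ContinuousLinearMap.IsPositive

theorem antitoneOn_Ici_of_hasDerivWithinAt_nonpos {g g' : ℝ → ℝ} {a : ℝ}
    (hg : ∀ t ∈ Ici a, HasDerivWithinAt g (g' t) (Ici a) t) (hg' : ∀ t ∈ Ioi a, g' t ≤ 0) :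
    AntitoneOn g (Ici a) :=
  antitoneOn_of_hasDerivWithinAt_nonpos (convex_Ici a) (fun t ht => (hg t ht).continuousWithinAt)
    (fun t ht => by
      rw [interior_Ici] at ht ⊢
      exact (hg t (Ioi_subset_Ici_self ht)).mono Ioi_subset_Ici_self)
    (fun t ht => hg' t (by rwa [interior_Ici] at ht))

theorem mul_exp_le_of_neg_mul_le_deriv {g g' : ℝ → ℝ} {C a b : ℝ} (hab : a ≤ b)
    (hg : ContinuousOn g (Icc a b)) (hg' : ∀ t ∈ Ico a b, HasDerivWithinAt g (g' t) (Ici t) t)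
    (hbound : ∀ t ∈ Ico a b, -C * g t ≤ g' t) : g a * exp (-C * (b - a)) ≤ g b := by
  have := le_gronwallBound_of_liminf_deriv_right_le (f := fun t => -g t) (f' := fun t => -g' t)
    (δ := -g a) (K := -C) (ε := 0) hg.neg
    (fun t ht _ hr => (hg' t ht).neg.liminf_right_slope_le hr) le_rfl
    (fun t ht => by linarith [hbound t ht]) b (right_mem_Icc.2 hab)
  rw [gronwallBound_ε0] at this
  linarith

theorem le_mul_rpow_of_rpow_mul_le {x y M s a : ℝ} (hx : 0 ≤ x) (hy : 0 < y) (hs : 0 < s)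
    (h : x ^ s * y ^ a ≤ M) : x ≤ M ^ s⁻¹ * y ^ (-a / s) := by
  have hM : 0 ≤ M := (by positivity : 0 ≤ x ^ s * y ^ a).trans h
  have : x ≤ (M * y ^ (-a)) ^ s⁻¹ := by
    rwa [le_rpow_inv_iff_of_pos hx (by positivity) hs, rpow_neg hy.le, ← div_eq_mul_inv,
      le_div_iff₀ (by positivity)]
  rwa [mul_rpow hM (by positivity), ← rpow_mul hy.le, ← div_eq_mul_inv] at this

theorem mul_rpow_le_of_rpow_neg_le {x y D s a : ℝ} (hx : 0 < x) (hy : 0 < y) (hD : 0 < D)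
    (hs : 0 < s) (h : x ^ (-s) ≤ D * y ^ a) : D ^ (-s⁻¹) * y ^ (-a / s) ≤ x := by
  have : (D * y ^ a) ^ (-s)⁻¹ ≤ x := (rpow_inv_le_iff_of_neg (by positivity) hx (by linarith)).2 h
  rwa [mul_rpow hD.le (by positivity), ← rpow_mul hy.le, inv_neg, mul_neg, ← div_eq_mul_inv,
    ← neg_div] at this

namespace IsParSolution

variable {H : Type*} [NormedAddCommGroup H] [InnerProductSpace ℝ H] {A : H →L[ℝ] H} {p γ : ℝ}
  {u₀ : H} {u u' : ℝ → H}

theorem derivative_eq (hu : IsParSolution A p γ u₀ u u') {t : ℝ} (ht : t ∈ Ici 0) :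
    u' t = -((1 + t) ^ p * ⟪A (u t), u t⟫ ^ γ) • A (u t) := by
  rw [eq_neg_of_add_eq_zero_left (hu.2.2.2 t ht), neg_smul]

theorem hasDerivWithinAt_energy (hu : IsParSolution A p γ u₀ u u')
    (hA : (A : H →ₗ[ℝ] H).IsSymmetric) {t : ℝ} (ht : t ∈ Ici 0) :
    HasDerivWithinAt (fun s => ⟪A (u s), u s⟫)
      (-2 * ((1 + t) ^ p * ⟪A (u t), u t⟫ ^ γ) * ‖A (u t)‖ ^ 2) (Ici 0) t := by
  have hud := hu.2.1 t ht
  have hAu : HasDerivWithinAt (fun s => A (u s)) (A (u' t)) (Ici 0) t :=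
    A.hasFDerivAt.comp_hasDerivWithinAt t hud
  refine (hAu.inner ℝ hud).congr_deriv ?_
  have hsymm : ⟪A (u' t), u t⟫ = ⟪A (u t), u' t⟫ := (hA _ _).trans (real_inner_comm _ _)
  rw [hsymm, hu.derivative_eq ht, real_inner_smul_right, real_inner_self_eq_norm_sq]
  ring

theorem hasDerivWithinAt_norm_sq (hu : IsParSolution A p γ u₀ u u') {t : ℝ} (ht : t ∈ Ici 0) :
    HasDerivWithinAt (fun s => ‖u s‖ ^ 2)
      (-2 * ((1 + t) ^ p * ⟪A (u t), u t⟫ ^ γ) * ⟪A (u t), u t⟫) (Ici 0) t := by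
  refine (hu.2.1 t ht).norm_sq.congr_deriv ?_
  have hcomm : ⟪u t, A (u t)⟫ = ⟪A (u t), u t⟫ := real_inner_comm _ _
  rw [hu.derivative_eq ht, real_inner_smul_right, hcomm]
  ring

theorem energy_antitoneOn (hu : IsParSolution A p γ u₀ u u') (hA : A.IsPositive) :
    AntitoneOn (fun t => ⟪A (u t), u t⟫) (Ici 0) :=
  antitoneOn_Ici_of_hasDerivWithinAt_nonpos
    (fun t ht => hu.hasDerivWithinAt_energy hA.isSymmetric ht) fun t ht => by
      have := hA.inner_nonneg_left (u t)
      have : 0 ≤ 1 + t := by linarith [mem_Ioi.1 ht]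
      have : 0 ≤ (1 + t) ^ p * ⟪A (u t), u t⟫ ^ γ := by positivity
      nlinarith [sq_nonneg ‖A (u t)‖]

theorem energy_pos (hu : IsParSolution A p γ u₀ u u') (hA : A.IsPositive) (hp : 0 ≤ p)
    (hγ : 0 ≤ γ) (h₀ : 0 < ⟪A u₀, u₀⟫) {T : ℝ} (hT : T ∈ Ici 0) : 0 < ⟪A (u T), u T⟫ := by
  set C := 2 * ‖A‖ * ((1 + T) ^ p * ⟪A u₀, u₀⟫ ^ γ)
  have hderiv (t : ℝ) (ht : t ∈ Ici 0) := hu.hasDerivWithinAt_energy hA.isSymmetric ht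
  have hbound : ∀ t ∈ Ico 0 T,
      -C * ⟪A (u t), u t⟫ ≤ -2 * ((1 + t) ^ p * ⟪A (u t), u t⟫ ^ γ) * ‖A (u t)‖ ^ 2 := by
    rintro t ⟨ht0, htT⟩
    have hT0 : 0 ≤ T := hT
    have hf := hA.inner_nonneg_left (u t)
    have hft : ⟪A (u t), u t⟫ ≤ ⟪A u₀, u₀⟫ := by
      simpa only [hu.1] using hu.energy_antitoneOn hA self_mem_Ici ht0 ht0
    have ht1 : 0 ≤ 1 + t := by linarith
    have hrate : 2 * ((1 + t) ^ p * ⟪A (u t), u t⟫ ^ γ) * ‖A (u t)‖ ^ 2 ≤ C * ⟪A (u t), u t⟫ :=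
      calc 2 * ((1 + t) ^ p * ⟪A (u t), u t⟫ ^ γ) * ‖A (u t)‖ ^ 2
          ≤ 2 * ((1 + t) ^ p * ⟪A (u t), u t⟫ ^ γ) * (‖A‖ * ⟪A (u t), u t⟫) := by
            gcongr; exact hA.norm_apply_sq_le _
        _ ≤ 2 * ((1 + T) ^ p * ⟪A u₀, u₀⟫ ^ γ) * (‖A‖ * ⟪A (u t), u t⟫) := by
            gcongr
        _ = C * ⟪A (u t), u t⟫ := by ring
    linarith
  have key := mul_exp_le_of_neg_mul_le_deriv hT
    (fun t ht => (hderiv t ht.1).continuousWithinAt.mono Icc_subset_Ici_self)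
    (fun t ht => (hderiv t ht.1).mono (Ici_subset_Ici.2 ht.1)) hbound
  rw [sub_zero, hu.1] at key
  exact (mul_pos h₀ (exp_pos _)).trans_le key

theorem energy_rpow_neg_le (hu : IsParSolution A p γ u₀ u u') (hA : A.IsPositive) (hp : 0 ≤ p)
    (hγ : 0 < γ) (h₀ : 0 < ⟪A u₀, u₀⟫) {t : ℝ} (ht : t ∈ Ici 0) :
    ⟪A (u t), u t⟫ ^ (-γ) ≤ (⟪A u₀, u₀⟫ ^ (-γ) + 2 * γ * ‖A‖ / (p + 1)) * (1 + t) ^ (p + 1) := by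
  set k := 2 * γ * ‖A‖ / (p + 1)
  have hpos (s : ℝ) (hs : s ∈ Ici 0) := hu.energy_pos hA hp hγ.le h₀ hs
  have hanti : AntitoneOn (fun s => ⟪A (u s), u s⟫ ^ (-γ) - k * (1 + s) ^ (p + 1)) (Ici 0) := by
    refine antitoneOn_Ici_of_hasDerivWithinAt_nonpos
      (g' := fun s => 2 * γ * (1 + s) ^ p * (‖A (u s)‖ ^ 2 / ⟪A (u s), u s⟫ - ‖A‖))
      (fun s hs => ?_) fun s hs => ?_
    · have hf := hpos s hs
      have hs1 : 1 + s ≠ 0 := by linarith [mem_Ici.1 hs]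
      have hsplit : ⟪A (u s), u s⟫ ^ (-γ - 1) = (⟪A (u s), u s⟫ ^ γ * ⟪A (u s), u s⟫)⁻¹ := by
        rw [show -γ - 1 = -(γ + 1) by ring, rpow_neg hf.le, rpow_add_one' hf.le (by linarith)]
      refine (((hu.hasDerivWithinAt_energy hA.isSymmetric hs).rpow_const (Or.inl hf.ne')).sub
        ((((hasDerivWithinAt_id s _).const_add 1).rpow_const (Or.inl hs1)).const_mul k)
        ).congr_deriv ?_
      have hfγ := rpow_pos_of_pos hf γ
      simp only [hsplit, id_eq, add_sub_cancel_right, k]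
      field_simp
    · have hs1 : 0 < 1 + s := by linarith [mem_Ioi.1 hs]
      have hnorm : ‖A (u s)‖ ^ 2 / ⟪A (u s), u s⟫ ≤ ‖A‖ :=
        (div_le_iff₀ (hpos s (Ioi_subset_Ici_self hs))).2 (hA.norm_apply_sq_le _)
      exact mul_nonpos_of_nonneg_of_nonpos (by positivity) (by linarith)
  have hX : 1 ≤ (1 + t) ^ (p + 1) := one_le_rpow (by linarith [mem_Ici.1 ht]) (by linarith)
  have hk : 0 ≤ k := by positivity
  have h0 := hanti self_mem_Ici ht ht
  simp only [add_zero, one_rpow, mul_one, hu.1] at h0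
  nlinarith [rpow_pos_of_pos h₀ (-γ)]

theorem energy_rpow_mul_le (hu : IsParSolution A p γ u₀ u u') (hA : A.IsPositive) (hp : -1 < p)
    (hγ : 0 ≤ γ) {t : ℝ} (ht : t ∈ Ici 0) :
    ⟪A (u t), u t⟫ ^ (γ + 1) * (1 + t) ^ (p + 1) ≤
      ⟪A u₀, u₀⟫ ^ (γ + 1) + (p + 1) / 2 * ‖u₀‖ ^ 2 := by
  have hp1 : 0 < p + 1 := by linarith
  have hanti : AntitoneOn
      (fun s => 2 / (p + 1) * (⟪A (u s), u s⟫ ^ (γ + 1) * (1 + s) ^ (p + 1)) + ‖u s‖ ^ 2)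
      (Ici 0) := by
    refine antitoneOn_Ici_of_hasDerivWithinAt_nonpos
      (g' := fun s => -(4 * (γ + 1) / (p + 1) * (1 + s) ^ (p + 1) * (1 + s) ^ p
        * (⟪A (u s), u s⟫ ^ γ) ^ 2 * ‖A (u s)‖ ^ 2))
      (fun s hs => ?_) fun s hs => ?_
    · have hf := hA.inner_nonneg_left (u s)
      have hs1 : 1 + s ≠ 0 := by linarith [mem_Ici.1 hs]
      refine (((((hu.hasDerivWithinAt_energy hA.isSymmetric hs).rpow_const
        (Or.inr (by linarith))).mul
        (((hasDerivWithinAt_id s _).const_add 1).rpow_const (Or.inl hs1))).const_mul _).add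
        (hu.hasDerivWithinAt_norm_sq hs)).congr_deriv ?_
      simp only [id_eq, add_sub_cancel_right, rpow_add_one' hf (by linarith : γ + 1 ≠ 0)]
      field_simp
      ring
    · have hf := hA.inner_nonneg_left (u s)
      have hs1 : 0 < 1 + s := by linarith [mem_Ioi.1 hs]
      exact neg_nonpos.2 (by positivity)
  have h0 := hanti self_mem_Ici ht ht
  simp only [add_zero, one_rpow, mul_one, hu.1] at h0
  refine le_of_mul_le_mul_left ?_ (by positivity : 0 < 2 / (p + 1))
  have : 2 / (p + 1) * ((p + 1) / 2 * ‖u₀‖ ^ 2) = ‖u₀‖ ^ 2 := by field_simp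
  nlinarith [sq_nonneg ‖u t‖]

end IsParSolution

theorem parabolic_decay_two_sided_general
    {H : Type*} [NormedAddCommGroup H] [InnerProductSpace ℝ H]
    (A : H →L[ℝ] H)
    (hA_sa : ∀ x y : H, ⟪A x, y⟫ = ⟪x, A y⟫)
    (hA_nn : ∀ x : H, 0 ≤ ⟪A x, x⟫)
    (p γ : ℝ) (hp0 : 0 ≤ p) (hγ : 1 ≤ γ)
    (u₀ : H) (hmdg : 0 < ⟪A u₀, u₀⟫)
    (u u' : ℝ → H) (hu : IsParSolution A p γ u₀ u u') :
    ∃ γ₃ > 0, ∃ γ₄ > 0, ∀ t ∈ Set.Ici (0:ℝ),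
      γ₃ * (1+t) ^ (-(p+1)/γ) ≤ ⟪A (u t), u t⟫ ∧
      ⟪A (u t), u t⟫ ≤ γ₄ * (1+t) ^ (-(p+1)/(γ+1)) := by
  have hA : A.IsPositive := A.isPositive_iff.2 ⟨hA_sa, hA_nn⟩
  have hγ0 : 0 < γ := by linarith
  have hD : 0 < ⟪A u₀, u₀⟫ ^ (-γ) + 2 * γ * ‖A‖ / (p + 1) := by positivity
  have hM : 0 < ⟪A u₀, u₀⟫ ^ (γ + 1) + (p + 1) / 2 * ‖u₀‖ ^ 2 := by positivity
  refine ⟨_, rpow_pos_of_pos hD (-γ⁻¹), _, rpow_pos_of_pos hM (γ + 1)⁻¹, fun t ht => ⟨?_, ?_⟩⟩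
  · exact mul_rpow_le_of_rpow_neg_le (hu.energy_pos hA hp0 hγ0.le hmdg ht)
      (by linarith [mem_Ici.1 ht]) hD hγ0 (hu.energy_rpow_neg_le hA hp0 hγ0 hmdg ht)
  · exact le_mul_rpow_of_rpow_mul_le (hA.inner_nonneg_left _) (by linarith [mem_Ici.1 ht])
      (by linarith) (hu.energy_rpow_mul_le hA (by linarith) hγ0.le ht)

/-- Decay estimate (3.3): `γ₃ (1+t)^{-(p+1)/γ} ≤ ⟨Au(t),u(t)⟩ ≤ γ₄ (1+t)^{-(p+1)/(γ+1)}`. -/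
theorem parabolic_decay_two_sided
    {H : Type*} [NormedAddCommGroup H] [InnerProductSpace ℝ H]
    (A : H →L[ℝ] H)
    (hA_sa : ∀ x y : H, ⟪A x, y⟫ = ⟪x, A y⟫)
    (hA_nn : ∀ x : H, 0 ≤ ⟪A x, x⟫)
    (p γ : ℝ) (hp0 : 0 ≤ p) (hp1 : p ≤ 1) (hγ : 1 ≤ γ)
    (u₀ : H) (hmdg : 0 < ⟪A u₀, u₀⟫)
    (u u' : ℝ → H) (hu : IsParSolution A p γ u₀ u u') :
    ∃ γ₃ > 0, ∃ γ₄ > 0, ∀ t ∈ Set.Ici (0:ℝ),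
      γ₃ * (1+t) ^ (-(p+1)/γ) ≤ ⟪A (u t), u t⟫ ∧
      ⟪A (u t), u t⟫ ≤ γ₄ * (1+t) ^ (-(p+1)/(γ+1)) :=
  parabolic_decay_two_sided_general A hA_sa hA_nn p γ hp0 hγ u₀ hmdg u u' hu
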